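/- arXiv:2512.02491 — 3 statements merged into one kernel-verified Lean document; each statement's English description precedes it below -/
import Mathlib

section
/- Let S be a finite set of positive natural numbers and k a natural number. Let M be the multiset of integers consisting of one copy of (x : ℤ) for each x ∈ S together with one additional copy of −k. Then there exists a subset S' ⊆ S with ∑_{x ∈ S'} x = k if and only if there exists a sub-multiset R of M with 1 ≤ card(R) and ∑ R = 0. -/
/-- Correctness of the reduction from SUBSET-SUM (sum form): for a finite set `S` of
positive naturals and a target `k`, there is a subset of `S` summing to `k` iff the
multiset consisting of the elements of `S` (cast to `ℤ`) together with one copy of `-k`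
has a nonempty sub-multiset summing to `0`. -/
theorem subsetSum_iff_exists_submultiset_sum_zero
    (S : Finset ℕ) (hS : ∀ x ∈ S, 0 < x) (k : ℕ) :
    (∃ S' ⊆ S, ∑ x ∈ S', x = k) ↔
      ∃ R : Multiset ℤ,
        R ≤ S.val.map (fun x : ℕ => (x : ℤ)) + {(-(k : ℤ))} ∧
        1 ≤ Multiset.card R ∧ R.sum = 0 := by
  constructor
  · rintro ⟨S', hS'sub, hS'sum⟩
    refine ⟨S'.val.map (fun x : ℕ => (x : ℤ)) + {(-(k : ℤ))}, ?_, ?_, ?_⟩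
    · exact add_le_add_left (Multiset.map_le_map (Finset.val_le_iff.mpr hS'sub)) _
    · simp
    · have : (S'.val.map (fun x : ℕ => (x : ℤ))).sum = ((∑ x ∈ S', x : ℕ) : ℤ) := by
        rw [show (S'.val.map (fun x : ℕ => (x : ℤ))).sum = ∑ x ∈ S', (x : ℤ) from rfl]
        push_cast
        rfl
      simp [this, hS'sum]
  · rintro ⟨R, hle, hcard, hsum⟩
    set A := S.val.map (fun x : ℕ => (x : ℤ)) with hA
    set R₂ := R - A with hR₂
    set R₁ := R - R₂ with hR₁
    have h2 : R₂ ≤ {(-(k : ℤ))} := tsub_le_iff_left.mpr hle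
    have h1 : R₁ ≤ A := by
      rw [Multiset.le_iff_count]
      intro a
      rw [hR₁, Multiset.count_sub, hR₂, Multiset.count_sub]
      omega
    have hR : R₁ + R₂ = R := tsub_add_cancel_of_le tsub_le_self
    -- every element of R₁ is a cast of a positive natural
    have hpos : ∀ z ∈ R₁, 1 ≤ z := by
      intro z hz
      have := Multiset.mem_of_le h1 hz
      rw [hA, Multiset.mem_map] at this
      obtain ⟨x, hx, rfl⟩ := this
      exact_mod_cast hS x hx
    -- turn R₁ back into a multiset of naturals
    have hmap : (R₁.map Int.toNat).map (fun x : ℕ => (x : ℤ)) = R₁ := by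
      rw [Multiset.map_map]
      refine Eq.trans (Multiset.map_congr rfl ?_) (Multiset.map_id R₁)
      intro z hz
      simp only [Function.comp_apply, id]
      exact Int.toNat_of_nonneg (le_trans zero_le_one (hpos z hz))
    have hTle : R₁.map Int.toNat ≤ S.val := by
      rw [← Multiset.map_le_map_iff (f := fun x : ℕ => (x : ℤ)) Nat.cast_injective, hmap]
      exact h1
    have hnodup : (R₁.map Int.toNat).Nodup := Multiset.nodup_of_le hTle S.nodup
    rcases (Multiset.le_singleton).mp h2 with h0 | hk
    · -- R₂ = 0 : contradiction, all elements of R are ≥ 1 but sum is 0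
      exfalso
      have hR1 : R₁ = R := by rw [← hR, h0, add_zero]
      have := Multiset.card_nsmul_le_sum (fun z hz => hpos z (hR1 ▸ hz))
      rw [hsum, nsmul_eq_mul, mul_one] at this
      omega
    · -- R₂ = {-k} : R₁ sums to k
      refine ⟨⟨R₁.map Int.toNat, hnodup⟩, Finset.val_le_iff.mp hTle, ?_⟩
      have hsum1 : R₁.sum = (k : ℤ) := by
        have := hR ▸ hsum
        rw [hk] at this
        simp only [Multiset.sum_add, Multiset.sum_singleton] at this
        linarith
      have : (((R₁.map Int.toNat).sum : ℕ) : ℤ) = (k : ℤ) := by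
        rw [← hsum1]
        conv_rhs => rw [← hmap]
        exact Nat.cast_multiset_sum (R := ℤ) _
      have hnat : (R₁.map Int.toNat).sum = k := by exact_mod_cast this
      simpa [Finset.sum, Multiset.map_id'] using hnat
end

section
/- Let S be a finite set of positive natural numbers and k a natural number. Let M be the multiset of integers consisting of one copy of (x : ℤ) for each x ∈ S together with one additional copy of −k. Then there exists a subset S' ⊆ S with ∑_{x ∈ S'} x = k if and only if there exists a nonempty sub-multiset R of M whose average (∑ R : ℚ) / card(R) equals 0. -/
lemma exists_map_eq_of_le_map {α β : Type*} [DecidableEq β] {f : α → β} {s : Multiset α} :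
    ∀ {u : Multiset β}, u ≤ s.map f → ∃ t ≤ s, t.map f = u := by
  induction s using Multiset.induction with
  | empty =>
    intro u hu
    simp only [Multiset.map_zero, Multiset.le_zero] at hu
    exact ⟨0, le_refl _, by simp [hu]⟩
  | cons a s ih =>
    intro u hu
    rw [Multiset.map_cons] at hu
    by_cases h : f a ∈ u
    · obtain ⟨t, ht, htm⟩ := ih (Multiset.erase_le_iff_le_cons.2 hu)
      refine ⟨a ::ₘ t, Multiset.cons_le_cons _ ht, ?_⟩
      rw [Multiset.map_cons, htm, Multiset.cons_erase h]
    · obtain ⟨t, ht, htm⟩ := ih ((Multiset.le_cons_of_notMem h).1 hu)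
      exact ⟨t, ht.trans (Multiset.le_cons_self _ _), htm⟩

/-- Correctness of the reduction from SUBSET-SUM (average form): for a finite set `S` of
positive naturals and a target `k`, there is a subset of `S` summing to `k` iff the
multiset consisting of the elements of `S` (cast to `ℤ`) together with one copy of `-k`
has a nonempty sub-multiset whose average is `0`. -/
theorem subsetSum_iff_exists_submultiset_average_zero
    (S : Finset ℕ) (hS : ∀ x ∈ S, 0 < x) (k : ℕ) :
    (∃ S' ⊆ S, ∑ x ∈ S', x = k) ↔
      ∃ R : Multiset ℤ,
        R ≤ S.val.map (fun x : ℕ => (x : ℤ)) + {(-(k : ℤ))} ∧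
        R ≠ 0 ∧ (R.sum : ℚ) / (Multiset.card R : ℚ) = 0 := by
  constructor
  · rintro ⟨S', hsub, hsum⟩
    refine ⟨S'.val.map (fun x : ℕ => (x : ℤ)) + {(-(k : ℤ))}, ?_, ?_, ?_⟩
    · exact add_le_add (Multiset.map_le_map (Finset.val_le_iff.2 hsub)) (le_refl _)
    · simp [Multiset.eq_zero_iff_forall_notMem]
    · have hmapsum : (S'.val.map (fun x : ℕ => (x : ℤ))).sum = ∑ x ∈ S', (x : ℤ) := rfl
      have hs : (S'.val.map (fun x : ℕ => (x : ℤ)) + {(-(k : ℤ))}).sum = 0 := by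
        rw [Multiset.sum_add, Multiset.sum_singleton, hmapsum, ← Nat.cast_sum, hsum]
        ring
      rw [hs]
      simp
  · rintro ⟨R, hle, hne, havg⟩
    have hcard : (Multiset.card R : ℚ) ≠ 0 := by
      simp only [ne_eq, Nat.cast_eq_zero, Multiset.card_eq_zero]
      exact hne
    have hsum0 : R.sum = 0 := by
      have := (div_eq_zero_iff.1 havg).resolve_right hcard
      exact_mod_cast this
    have hposR : ∀ a ∈ R, a ≠ -(k : ℤ) → 0 < a := by
      intro a haR hane
      have haM := Multiset.mem_of_le hle haR
      rw [Multiset.mem_add] at haM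
      rcases haM with h | h
      · obtain ⟨x, hxS, rfl⟩ := Multiset.mem_map.1 h
        exact_mod_cast hS x hxS
      · simp only [Multiset.mem_singleton] at h
        exact absurd h hane
    have hmem : -(k : ℤ) ∈ R := by
      by_contra hmemc
      obtain ⟨a, haR⟩ := Multiset.exists_mem_of_ne_zero hne
      have hpos := hposR a haR (fun h => hmemc (h ▸ haR))
      have := Multiset.all_zero_of_le_zero_le_of_sum_eq_zero
        (fun x hx => (hposR x hx (fun h => hmemc (h ▸ hx))).le) hsum0 a haR
      omega
    set R' := R.erase (-(k : ℤ)) with hR'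
    have hRdecomp : R = -(k : ℤ) ::ₘ R' := (Multiset.cons_erase hmem).symm
    have hR'le : R' ≤ S.val.map (fun x : ℕ => (x : ℤ)) := by
      rw [Multiset.le_iff_count]
      intro a
      have hcount := Multiset.count_le_of_le a hle
      rw [Multiset.count_add] at hcount
      by_cases ha : a = -(k : ℤ)
      · subst ha
        have hzero : Multiset.count (-(k : ℤ)) (S.val.map (fun x : ℕ => (x : ℤ))) = 0 := by
          rw [Multiset.count_eq_zero]
          intro hc
          obtain ⟨x, hxS, hx⟩ := Multiset.mem_map.1 hc
          have := hS x hxS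
          omega
        rw [hzero]
        have h1 : Multiset.count (-(k : ℤ)) ({(-(k : ℤ))} : Multiset ℤ) = 1 := by simp
        rw [hzero, h1] at hcount
        have h2 : Multiset.count (-(k : ℤ)) R' = Multiset.count (-(k : ℤ)) R - 1 :=
          Multiset.count_erase_self _ _
        omega
      · rw [Multiset.count_erase_of_ne ha]
        simpa [Multiset.count_singleton, ha] using hcount
    obtain ⟨T, hTle, hTmap⟩ := exists_map_eq_of_le_map hR'le
    have hTnodup : T.Nodup := Multiset.nodup_of_le hTle S.nodup
    refine ⟨⟨T, hTnodup⟩, ?_, ?_⟩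
    · intro x hx
      exact Multiset.mem_of_le hTle hx
    · have hR'sum : R'.sum = (k : ℤ) := by
        have := hRdecomp ▸ hsum0
        rw [Multiset.sum_cons] at this
        omega
      have hcast : ((∑ x ∈ (⟨T, hTnodup⟩ : Finset ℕ), x : ℕ) : ℤ) = (k : ℤ) := by
        rw [← hR'sum, ← hTmap, Nat.cast_sum]
        rfl
      exact_mod_cast hcast
end

section
/- Let p, r, m : ℕ, let X be a real matrix with rows indexed by Fin p ⊕ Fin r and columns indexed by Fin m, and let o : Fin p ⊕ Fin r → ℝ. Write X_new, o_new for the restrictions to the Fin p rows and X_rmv, o_rmv for the restrictions to the Fin r rows. Set A = Xᵀ * X and suppose A is invertible and the r × r matrix 1 − X_rmv * A⁻¹ * X_rmvᵀ is invertible. Then X_newᵀ * X_new is invertible, and the vector β_new := (A⁻¹ + A⁻¹ * X_rmvᵀ * (1 − X_rmv * A⁻¹ * X_rmvᵀ)⁻¹ * X_rmv * A⁻¹) *ᵥ (Xᵀ *ᵥ o − X_rmvᵀ *ᵥ o_rmv) satisfies β_new = (X_newᵀ * X_new)⁻¹ *ᵥ (X_newᵀ *ᵥ o_new); in particular β_new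 solves the normal equations (X_newᵀ * X_new) *ᵥ β_new = X_newᵀ *ᵥ o_new of ordinary least squares on the remaining rows. -/
/-!
Deleting the rows `X_rmv` from the data turns the Gram matrix `A = XᵀX` into
`X_newᵀX_new = A - X_rmvᵀX_rmv` and the moment vector `Xᵀo` into
`X_newᵀo_new = Xᵀo - X_rmvᵀo_rmv`. The displayed matrix is the Woodbury expression for the
inverse of this rank-`r` downdate of `A`: multiplying it by `A - UV` on the left collapses
to `1` once `(1 - VA⁻¹U)(1 - VA⁻¹U)⁻¹ = 1` is used.
-/

open Matrix

namespace Matrix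

section Woodbury

variable {n k α : Type*} [Fintype n] [Fintype k] [DecidableEq n] [DecidableEq k] [CommRing α]
  {A : Matrix n n α} {U : Matrix n k α} {V : Matrix k n α}

theorem sub_mul_mul_woodbury_eq_one (hA : IsUnit A) (hS : IsUnit (1 - V * A⁻¹ * U)) :
    (A - U * V) * (A⁻¹ + A⁻¹ * U * (1 - V * A⁻¹ * U)⁻¹ * V * A⁻¹) = 1 := by
  have hAA : A * A⁻¹ = 1 := mul_nonsing_inv A ((isUnit_iff_isUnit_det A).mp hA)
  have hSS := mul_nonsing_inv _ ((isUnit_iff_isUnit_det _).mp hS)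
  calc (A - U * V) * (A⁻¹ + A⁻¹ * U * (1 - V * A⁻¹ * U)⁻¹ * V * A⁻¹)
      = 1 - U * V * A⁻¹ + U * ((1 - V * A⁻¹ * U) * (1 - V * A⁻¹ * U)⁻¹) * V * A⁻¹ := by
        simp only [Matrix.mul_add, Matrix.sub_mul, Matrix.mul_sub, Matrix.mul_assoc, hAA,
          ← Matrix.mul_assoc A A⁻¹, Matrix.one_mul]
    _ = 1 := by rw [hSS, Matrix.mul_one, sub_add_cancel]

theorem isUnit_sub_mul (hA : IsUnit A) (hS : IsUnit (1 - V * A⁻¹ * U)) :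
    IsUnit (A - U * V) :=
  (isUnit_iff_isUnit_det _).mpr (isUnit_det_of_right_inverse (sub_mul_mul_woodbury_eq_one hA hS))

theorem sub_mul_inv_eq_add (hA : IsUnit A) (hS : IsUnit (1 - V * A⁻¹ * U)) :
    (A - U * V)⁻¹ = A⁻¹ + A⁻¹ * U * (1 - V * A⁻¹ * U)⁻¹ * V * A⁻¹ :=
  inv_eq_right_inv (sub_mul_mul_woodbury_eq_one hA hS)

end Woodbury

section SumRows

variable {m₁ m₂ n α : Type*} [Fintype m₁] [Fintype m₂] [NonUnitalNonAssocSemiring α]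

theorem transpose_mul_eq_add_submatrix (X Y : Matrix (m₁ ⊕ m₂) n α) :
    Xᵀ * Y = (X.submatrix Sum.inl id)ᵀ * Y.submatrix Sum.inl id +
      (X.submatrix Sum.inr id)ᵀ * Y.submatrix Sum.inr id := by
  ext i j
  simp [mul_apply, Fintype.sum_sum_type]

theorem transpose_mulVec_eq_add_submatrix (X : Matrix (m₁ ⊕ m₂) n α) (v : m₁ ⊕ m₂ → α) :
    Xᵀ *ᵥ v = (X.submatrix Sum.inl id)ᵀ *ᵥ (v ∘ Sum.inl) +
      (X.submatrix Sum.inr id)ᵀ *ᵥ (v ∘ Sum.inr) := by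
  ext i
  simp [mulVec, dotProduct, Fintype.sum_sum_type]

end SumRows

end Matrix

/-- Correctness of the exact Woodbury-based downdate of the OLS coefficients: with data
rows partitioned into kept rows (`Fin p`, via `Sum.inl`) and removed rows (`Fin r`, via
`Sum.inr`), if the full Gram matrix `A = Xᵀ * X` is invertible and the `r × r` matrix
`1 - X_rmv * A⁻¹ * X_rmvᵀ` is invertible, then the Gram matrix of the kept rows is
invertible, and the vector
`β_new = (A⁻¹ + A⁻¹ * X_rmvᵀ * (1 - X_rmv * A⁻¹ * X_rmvᵀ)⁻¹ * X_rmv * A⁻¹) *ᵥ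
  (Xᵀ *ᵥ o - X_rmvᵀ *ᵥ o_rmv)`
equals the OLS coefficient vector `(X_newᵀ * X_new)⁻¹ *ᵥ (X_newᵀ *ᵥ o_new)` on the kept
rows; in particular it solves the corresponding normal equations. -/
theorem woodbury_downdate_ols_coefficients (p r m : ℕ)
    (X : Matrix (Fin p ⊕ Fin r) (Fin m) ℝ) (o : Fin p ⊕ Fin r → ℝ)
    (hA : IsUnit (Xᵀ * X))
    (hS : IsUnit ((1 : Matrix (Fin r) (Fin r) ℝ) -
      X.submatrix Sum.inr id * (Xᵀ * X)⁻¹ * (X.submatrix Sum.inr id)ᵀ)) :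
    IsUnit ((X.submatrix Sum.inl id)ᵀ * X.submatrix Sum.inl id) ∧
    ((Xᵀ * X)⁻¹ + (Xᵀ * X)⁻¹ * (X.submatrix Sum.inr id)ᵀ *
        ((1 : Matrix (Fin r) (Fin r) ℝ) -
          X.submatrix Sum.inr id * (Xᵀ * X)⁻¹ * (X.submatrix Sum.inr id)ᵀ)⁻¹ *
        X.submatrix Sum.inr id * (Xᵀ * X)⁻¹) *ᵥ
      (Xᵀ *ᵥ o - (X.submatrix Sum.inr id)ᵀ *ᵥ (o ∘ Sum.inr)) =
      ((X.submatrix Sum.inl id)ᵀ * X.submatrix Sum.inl id)⁻¹ *ᵥ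
        ((X.submatrix Sum.inl id)ᵀ *ᵥ (o ∘ Sum.inl)) ∧
    ((X.submatrix Sum.inl id)ᵀ * X.submatrix Sum.inl id) *ᵥ
      (((Xᵀ * X)⁻¹ + (Xᵀ * X)⁻¹ * (X.submatrix Sum.inr id)ᵀ *
          ((1 : Matrix (Fin r) (Fin r) ℝ) -
            X.submatrix Sum.inr id * (Xᵀ * X)⁻¹ * (X.submatrix Sum.inr id)ᵀ)⁻¹ *
          X.submatrix Sum.inr id * (Xᵀ * X)⁻¹) *ᵥ
        (Xᵀ *ᵥ o - (X.submatrix Sum.inr id)ᵀ *ᵥ (o ∘ Sum.inr))) =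
      (X.submatrix Sum.inl id)ᵀ *ᵥ (o ∘ Sum.inl) := by
  set X_new := X.submatrix Sum.inl id
  set X_rmv := X.submatrix Sum.inr id
  have hGram : X_newᵀ * X_new = Xᵀ * X - X_rmvᵀ * X_rmv := by
    rw [transpose_mul_eq_add_submatrix X X, add_sub_cancel_right]
  have hMoment : Xᵀ *ᵥ o - X_rmvᵀ *ᵥ (o ∘ Sum.inr) = X_newᵀ *ᵥ (o ∘ Sum.inl) := by
    rw [transpose_mulVec_eq_add_submatrix X o, add_sub_cancel_right]
  have hGramUnit : IsUnit (X_newᵀ * X_new) := hGram ▸ isUnit_sub_mul hA hS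
  rw [← sub_mul_inv_eq_add hA hS, ← hGram, hMoment]
  refine ⟨hGramUnit, rfl, ?_⟩
  rw [mulVec_mulVec, mul_nonsing_inv _ ((isUnit_iff_isUnit_det _).mp hGramUnit), one_mulVec]
end
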